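/- Let A = {a₁, …, a_m} be a finite alphabet, let γ = [n_{a₁}, …, n_{a_m}] be a composition with Σ_j n_{a_j} = n, and let δ satisfy 0 < δ ≤ 1/n. Let f(x) = log₂(1 + δx). For a sequence s ∈ Aⁿ with composition γ, define the cost c(s) = Σ_{i=1}^n f( (n + 1 − i) / (n_{s_i} − n_{s_i}(s₁^{i−1})) ). Let z ∈ Aⁿ be any sequence constructed greedily: for each i = 1, …, n, z_i is chosen among the symbols a ∈ A with positive remaining count n_a − n_a(z₁^{i−1}) > 0 so as to minimize n_a − n_a(z₁^{i−1}). Then z is a global maximizer: c(z) ≥ c(s) for every sequence s ∈ Aⁿ with composition γ. -/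

import Mathlib

/-- Number of occurrences of symbol `a` among the first `i` entries of `s`. -/
def prefCount {A : Type*} [DecidableEq A] {n : ℕ} (s : Fin n → A) (i : Fin n) (a : A) : ℕ :=
  (Finset.univ.filter (fun j : Fin n => j < i ∧ s j = a)).card

/-- The cost `c(s) = Σᵢ log₂(1 + δ · (n + 1 − i)/(n_{sᵢ} − n_{sᵢ}(s₁^{i−1})))`
    (with `i` running over one-based positions `1, …, n`). -/
noncomputable def greedyCost {A : Type*} [DecidableEq A] {n : ℕ} (γ : A → ℕ) (δ : ℝ)
    (s : Fin n → A) : ℝ :=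
  ∑ i : Fin n, Real.logb 2
    (1 + δ * (((n : ℝ) - (i : ℕ)) / ((γ (s i) : ℝ) - (prefCount s i (s i) : ℝ))))

section FinLemmas
variable {A : Type*} [DecidableEq A] {n : ℕ}

lemma prefCount_zero (s : Fin (n+1) → A) (a : A) : prefCount s 0 a = 0 := by
  rw [prefCount]
  convert Finset.card_empty
  ext j
  simp [Fin.not_lt_zero]

lemma prefCount_succ (s : Fin (n+1) → A) (i : Fin n) (a : A) :
    prefCount s i.succ a = (if s 0 = a then 1 else 0) + prefCount (fun j => s j.succ) i a := by
  rw [prefCount, prefCount, Finset.card_filter, Finset.card_filter, Fin.sum_univ_succ]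
  congr 1
  · simp [Fin.succ_pos]
  · apply Finset.sum_congr rfl
    intro j _
    simp [Fin.succ_lt_succ_iff]

lemma comp_succ (s : Fin (n+1) → A) (a : A) :
    (Finset.univ.filter (fun i => s i = a)).card =
      (if s 0 = a then 1 else 0) +
      (Finset.univ.filter (fun j : Fin n => s j.succ = a)).card := by
  rw [Finset.card_filter, Finset.card_filter, Fin.sum_univ_succ]

end FinLemmas


noncomputable def fδ (δ x : ℝ) : ℝ := Real.logb 2 (1 + δ * x)

noncomputable def blockCost (δ : ℝ) (T g : ℕ) : ℝ :=
  ∑ d ∈ Finset.range g, fδ δ (((T : ℝ) - g + (d+1)) / (d+1))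

noncomputable def V (δ : ℝ) : ℕ → List ℕ → ℝ
  | _, [] => 0
  | N, g :: t => blockCost δ N g + V δ (N - g) t

lemma step_mono {δ M c c' : ℝ} (hδ : 0 < δ) (hM : 0 ≤ M) (hc : 1 ≤ c) (hcc : c ≤ c') :
    fδ δ ((M+1)/c') - fδ δ (M/c') ≤ fδ δ ((M+1)/c) - fδ δ (M/c) := by
  have hc0 : 0 < c := by linarith
  have hc'0 : 0 < c' := by linarith
  have key : ∀ b : ℝ, 0 < b → fδ δ ((M+1)/b) - fδ δ (M/b) =
      Real.logb 2 ((b + δ*M + δ)/(b + δ*M)) := by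
    intro b hb
    have h1 : 1 + δ * ((M+1)/b) = (b + δ*M + δ)/b := by field_simp; ring
    have h2 : 1 + δ * (M/b) = (b + δ*M)/b := by field_simp
    rw [fδ, fδ, h1, h2, ← Real.logb_div (by positivity) (by positivity)]
    congr 1
    field_simp
  rw [key c hc0, key c' hc'0]
  apply Real.logb_le_logb_of_le (by norm_num) (by positivity)
  rw [div_le_div_iff₀ (by positivity) (by positivity)]
  nlinarith

lemma star {δ : ℝ} (hδ : 0 < δ) (g h N : ℕ) (hg : 1 ≤ g) (hgh : g ≤ h) (hN : g + 1 ≤ N) :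
    fδ δ ((N:ℝ)/h) - fδ δ (((N:ℝ)-g)/h) ≤ blockCost δ N g - blockCost δ (N-1) g := by
  have hN1 : (((N-1 : ℕ)):ℝ) = (N:ℝ) - 1 := by
    have h1 : 1 ≤ N := by omega
    push_cast [h1]; ring
  have h0 := Finset.sum_range_sub (f := fun j : ℕ => fδ δ (((N:ℝ)-g+j)/h)) g
  have htel : fδ δ ((N:ℝ)/h) - fδ δ (((N:ℝ)-g)/h) =
      ∑ d ∈ Finset.range g, (fδ δ (((N:ℝ)-g+d+1)/h) - fδ δ (((N:ℝ)-g+d)/h)) := by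
    rw [show fδ δ ((N:ℝ)/h) = fδ δ (((N:ℝ)-g+(g:ℕ))/h) by norm_num,
        show fδ δ (((N:ℝ)-g)/h) = fδ δ (((N:ℝ)-g+((0:ℕ):ℝ))/h) by norm_num]
    rw [← h0]
    apply Finset.sum_congr rfl
    intro d _
    push_cast
    ring_nf
  rw [htel, blockCost, blockCost, ← Finset.sum_sub_distrib]
  apply Finset.sum_le_sum
  intro d hd
  have hdh : ((d:ℝ) + 1) ≤ (h:ℝ) := by
    have : d + 1 ≤ h := by have := Finset.mem_range.mp hd; omega
    exact_mod_cast this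
  have hgN : (g:ℝ) ≤ (N:ℝ) := by exact_mod_cast Nat.le_of_succ_le hN
  have hM : (0:ℝ) ≤ (N:ℝ) - g + d := by
    have : (0:ℝ) ≤ (d:ℝ) := Nat.cast_nonneg d
    linarith
  have := step_mono (δ := δ) (M := (N:ℝ)-g+d) (c := (d:ℝ)+1) (c' := (h:ℝ)) hδ hM
    (by have : (0:ℝ) ≤ (d:ℝ) := Nat.cast_nonneg d; linarith) hdh
  have e1 : ((N:ℝ) - g + d) + 1 = (N:ℝ) - ↑g + (↑d+1) := by ring
  have e2 : ((N - 1:ℕ):ℝ) - ↑g + (↑d+1) = (N:ℝ) - g + d := by rw [hN1]; ring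
  rw [e2]
  rw [e1] at this
  ring_nf at this ⊢
  linarith

lemma blockCost_zero (δ : ℝ) (T : ℕ) : blockCost δ T 0 = 0 := by simp [blockCost]

lemma blockCost_succ (δ : ℝ) (T g : ℕ) (hg : 1 ≤ g) (hT : 1 ≤ T) :
    blockCost δ T g = fδ δ ((T:ℝ)/g) + blockCost δ (T-1) (g-1) := by
  obtain ⟨k, rfl⟩ : ∃ k, g = k + 1 := ⟨g - 1, by omega⟩
  rw [blockCost, Finset.sum_range_succ]
  have hT1 : ((T-1:ℕ):ℝ) = (T:ℝ) - 1 := by push_cast [hT]; ring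
  have e0 : ((T:ℝ) - (k+1:ℕ) + ((k:ℝ)+1)) / ((k:ℝ)+1) = (T:ℝ)/((k+1:ℕ):ℝ) := by
    push_cast; ring_nf
  rw [add_comm]
  congr 1
  · rw [e0]
  · rw [blockCost]
    simp only [Nat.add_sub_cancel]
    apply Finset.sum_congr rfl
    intro d _
    rw [hT1]
    push_cast
    ring_nf

lemma V_zero_cons (δ : ℝ) (T : ℕ) (t : List ℕ) : V δ T (0 :: t) = V δ T t := by
  simp [V, blockCost_zero]

lemma orderedInsert_cons_ge {g m : ℕ} (r : List ℕ) (hgm : g ≤ m) (hr : ∀ x ∈ r, g ≤ x) :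
    List.orderedInsert (· ≤ ·) m (g :: r) = g :: List.orderedInsert (· ≤ ·) m r := by
  by_cases h : m ≤ g
  · have hmg : m = g := le_antisymm h hgm
    subst hmg
    simp only [List.orderedInsert, if_pos le_rfl]
    cases r with
    | nil => simp [List.orderedInsert]
    | cons b rb =>
      simp only [List.orderedInsert, if_pos (hr b (by simp))]
  · simp only [List.orderedInsert, if_neg h]

lemma chain {δ : ℝ} (hδ : 0 < δ) :
    ∀ (l : List ℕ), l.Pairwise (· ≤ ·) → (∀ x ∈ l, 0 < x) → ∀ h ∈ l, ∀ N : ℕ, l.sum ≤ N →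
    fδ δ ((N:ℝ)/h) + V δ (N-1) (List.orderedInsert (· ≤ ·) (h-1) (l.erase h)) ≤ V δ N l := by
  intro l
  induction l with
  | nil => intro _ _ h hmem; simp at hmem
  | cons g t ih =>
    intro hsort hpos h hmem N hsum
    have hgt : ∀ x ∈ t, g ≤ x := fun _ hx => List.rel_of_pairwise_cons hsort hx
    have hgpos : 0 < g := hpos g (by simp)
    have hsum' : g + t.sum ≤ N := by simpa [List.sum_cons] using hsum
    by_cases hhg : h = g
    · -- equality case
      subst hhg
      rw [List.erase_cons_head]
      have hOI : List.orderedInsert (· ≤ ·) (h-1) t = (h-1) :: t := by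
        cases t with
        | nil => rfl
        | cons b tb =>
          simp only [List.orderedInsert]
          rw [if_pos]
          exact le_trans (Nat.sub_le h 1) (hgt b (by simp))
      rw [hOI]
      have hNh : h ≤ N := by omega
      have hN1 : 1 ≤ N := by omega
      show fδ δ ((N:ℝ)/h) + (blockCost δ (N-1) (h-1) + V δ ((N-1)-(h-1)) t) ≤
        blockCost δ N h + V δ (N-h) t
      rw [show (N-1)-(h-1) = N - h by omega,
        blockCost_succ δ N h hgpos hN1]
      linarith [le_refl (V δ (N-h) t)]
    · -- h ∈ t
      have hht : h ∈ t := by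
        rcases List.mem_cons.mp hmem with h1 | h1
        · exact absurd h1 hhg
        · exact h1
      have hhpos : 0 < h := hpos h hmem
      have hgh : g ≤ h := hgt h hht
      have hgh' : g < h := lt_of_le_of_ne hgh (Ne.symm hhg)
      rw [List.erase_cons_tail (by simp [Ne.symm hhg, beq_iff_eq])]
      rw [orderedInsert_cons_ge (t.erase h) (by omega)
        (fun x hx => hgt x (List.mem_of_mem_erase hx))]
      show fδ δ ((N:ℝ)/h) + (blockCost δ (N-1) g +
          V δ ((N-1)-g) (List.orderedInsert (· ≤ ·) (h-1) (t.erase h))) ≤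
        blockCost δ N g + V δ (N-g) t
      have hsumt : t.sum ≤ N - g := by omega
      have hhsum : h ≤ t.sum := List.single_le_sum (fun x _ => Nat.zero_le x) h hht |>.trans le_rfl
      have hgN : g + 1 ≤ N := by
        have : 0 < h := hhpos; omega
      have hIH := ih (List.Pairwise.of_cons hsort) (fun x hx => hpos x (by simp [hx]))
        h hht (N - g) hsumt
      rw [show (N-1)-g = (N-g)-1 by omega]
      have hcast : ((N - g:ℕ):ℝ) = (N:ℝ) - g := by
        have : g ≤ N := by omega
        push_cast [this]; ring
      rw [hcast] at hIH
      have hstar := star hδ g h N hgpos hgh hgN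
      linarith

set_option linter.unusedSectionVars false

def posParts {A : Type*} [Fintype A] (γ : A → ℕ) : Multiset ℕ :=
  (Finset.univ.val.map γ).filter (fun k => 0 < k)

def sortedList {A : Type*} [Fintype A] (γ : A → ℕ) : List ℕ :=
  (posParts γ).sort (· ≤ ·)

section SL
variable {A : Type*} [Fintype A] [DecidableEq A] (γ : A → ℕ)

lemma sortedList_sorted : (sortedList γ).Pairwise (· ≤ ·) := Multiset.pairwise_sort _ _

lemma sortedList_pos : ∀ x ∈ sortedList γ, 0 < x := by
  intro x hx
  have : x ∈ posParts γ := by rwa [← Multiset.mem_sort (· ≤ ·)]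
  exact (Multiset.mem_filter.mp this).2

lemma sortedList_coe : ((sortedList γ) : Multiset ℕ) = posParts γ :=
  Multiset.sort_eq _ _

lemma sortedList_sum : (sortedList γ).sum = ∑ a, γ a := by
  have h1 : (sortedList γ).sum = (posParts γ).sum := by
    rw [← sortedList_coe γ, Multiset.sum_coe]
  rw [h1, posParts]
  have h2 : ((Finset.univ.val.map γ).filter (fun k => 0 < k)).sum +
      ((Finset.univ.val.map γ).filter (fun k => ¬ 0 < k)).sum = (Finset.univ.val.map γ).sum := by
    rw [← Multiset.sum_add, Multiset.filter_add_not]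
  have h3 : ((Finset.univ.val.map γ).filter (fun k => ¬ 0 < k)).sum = 0 := by
    apply Multiset.sum_eq_zero
    intro x hx
    have := (Multiset.mem_filter.mp hx).2
    omega
  have h4 : (Finset.univ.val.map γ).sum = ∑ a, γ a := rfl
  omega

lemma mem_posParts {b : A} (hb : 0 < γ b) : γ b ∈ posParts γ := by
  rw [posParts, Multiset.mem_filter]
  exact ⟨Multiset.mem_map_of_mem γ (Finset.mem_univ b), hb⟩

lemma mem_sortedList {b : A} (hb : 0 < γ b) : γ b ∈ sortedList γ := by
  rw [sortedList, Multiset.mem_sort]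
  exact mem_posParts γ hb

end SL

lemma sort_cons' (x : ℕ) (M : Multiset ℕ) :
    (x ::ₘ M).sort (· ≤ ·) = List.orderedInsert (· ≤ ·) x (M.sort (· ≤ ·)) := by
  refine List.Perm.eq_of_pairwise' (Multiset.pairwise_sort _ _)
    (List.Pairwise.orderedInsert _ _ (Multiset.pairwise_sort _ _)) ?_
  rw [← Multiset.coe_eq_coe]
  have h1 : ((x ::ₘ M).sort (· ≤ ·) : Multiset ℕ) = x ::ₘ M := Multiset.sort_eq _ _
  have h2 : ((List.orderedInsert (· ≤ ·) x (M.sort (· ≤ ·))) : Multiset ℕ) = x ::ₘ M := by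
    have := List.perm_orderedInsert (· ≤ ·) x (M.sort (· ≤ ·))
    rw [Multiset.coe_eq_coe.mpr this, ← Multiset.cons_coe, Multiset.sort_eq]
  rw [h1, h2]

lemma sort_erase' (x : ℕ) (M : Multiset ℕ) :
    (M.erase x).sort (· ≤ ·) = (M.sort (· ≤ ·)).erase x := by
  refine List.Perm.eq_of_pairwise' (Multiset.pairwise_sort _ _) ?_ ?_
  · exact List.Pairwise.sublist (List.erase_sublist (a := x)) (Multiset.pairwise_sort _ _)
  · rw [← Multiset.coe_eq_coe, Multiset.sort_eq, ← Multiset.coe_erase, Multiset.sort_eq]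

section Update
variable {A : Type*} [Fintype A] [DecidableEq A]

lemma map_update (γ : A → ℕ) (b : A) (c : ℕ) :
    Finset.univ.val.map (Function.update γ b c) = c ::ₘ (Finset.univ.val.map γ).erase (γ b) := by
  have hb : b ∈ Finset.univ.val := Finset.mem_univ_val b
  have hu : Finset.univ.val = b ::ₘ Finset.univ.val.erase b := (Multiset.cons_erase hb).symm
  rw [hu, Multiset.map_cons, Multiset.map_cons, Multiset.erase_cons_head,
    Function.update_self]
  congr 1
  apply Multiset.map_congr rfl
  intro y hy
  have hyb : y ≠ b := fun h => by
    subst h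
    exact (Finset.univ.nodup.notMem_erase hy)
  exact Function.update_of_ne hyb c γ

lemma posParts_update (γ : A → ℕ) (b : A) (hb : 0 < γ b) :
    posParts (Function.update γ b (γ b - 1)) =
      if 0 < γ b - 1 then (γ b - 1) ::ₘ (posParts γ).erase (γ b)
      else (posParts γ).erase (γ b) := by
  rw [posParts, map_update, Multiset.filter_cons]
  have herase : ((Finset.univ.val.map γ).erase (γ b)).filter (fun k => 0 < k) =
      (posParts γ).erase (γ b) := by
    have hmem : γ b ∈ Finset.univ.val.map γ := Multiset.mem_map_of_mem γ (Finset.mem_univ b)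
    have h1 : Finset.univ.val.map γ = γ b ::ₘ (Finset.univ.val.map γ).erase (γ b) :=
      (Multiset.cons_erase hmem).symm
    have : posParts γ = γ b ::ₘ ((Finset.univ.val.map γ).erase (γ b)).filter (fun k => 0 < k) := by
      conv_lhs => rw [posParts, h1]
      rw [Multiset.filter_cons_of_pos _ hb]
    rw [this, Multiset.erase_cons_head]
  rw [herase]
  by_cases hc : 0 < γ b - 1
  · rw [if_pos hc, if_pos hc]; rfl
  · rw [if_neg hc, if_neg hc]; simp

end Update

lemma orderedInsert_zero (l : List ℕ) : List.orderedInsert (· ≤ ·) 0 l = 0 :: l := by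
  cases l with
  | nil => rfl
  | cons b t => simp [List.orderedInsert, Nat.zero_le]

lemma V_sortedList_update {A : Type*} [Fintype A] [DecidableEq A]
    (δ : ℝ) (γ : A → ℕ) (b : A) (hb : 0 < γ b) (T : ℕ) :
    V δ T (sortedList (Function.update γ b (γ b - 1))) =
      V δ T (List.orderedInsert (· ≤ ·) (γ b - 1) ((sortedList γ).erase (γ b))) := by
  rw [sortedList, posParts_update γ b hb]
  by_cases hc : 0 < γ b - 1
  · rw [if_pos hc, sort_cons', sort_erase']
    rfl
  · rw [if_neg hc, sort_erase']
    have h1 : γ b - 1 = 0 := by omega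
    rw [h1, orderedInsert_zero, V_zero_cons]
    rfl

lemma greedyCost_succ {A : Type*} [DecidableEq A] {n : ℕ} (γ : A → ℕ) (δ : ℝ)
    (s : Fin (n+1) → A) (h1 : 1 ≤ γ (s 0)) :
    greedyCost γ δ s = fδ δ (((n:ℝ)+1)/(γ (s 0))) +
      greedyCost (Function.update γ (s 0) (γ (s 0) - 1)) δ (fun j => s j.succ) := by
  rw [greedyCost, Fin.sum_univ_succ]
  congr 1
  · rw [prefCount_zero, fδ]
    norm_num
  · rw [greedyCost]
    apply Finset.sum_congr rfl
    intro j _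
    have hnum : ((n+1:ℕ):ℝ) - ((j.succ : Fin (n+1)) : ℕ) = (n:ℝ) - (j:ℕ) := by
      rw [Fin.val_succ]; push_cast; ring
    rw [hnum]
    set a := s j.succ with ha
    have hpc := prefCount_succ s j a
    by_cases h0 : s 0 = a
    · have hup : Function.update γ (s 0) (γ (s 0) - 1) a = γ a - 1 := by
        rw [h0, Function.update_self]
      have hden : (γ a : ℝ) - (prefCount s j.succ a : ℝ) =
          ((Function.update γ (s 0) (γ (s 0) - 1) a : ℕ) : ℝ) -
          (prefCount (fun j => s j.succ) j a : ℝ) := by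
        rw [hup, hpc, if_pos h0]
        have : 1 ≤ γ a := h0 ▸ h1
        push_cast [this]
        ring
      rw [hden]
    · have hup : Function.update γ (s 0) (γ (s 0) - 1) a = γ a :=
        Function.update_of_ne (fun h => h0 h.symm) _ γ
      have hden : (γ a : ℝ) - (prefCount s j.succ a : ℝ) =
          ((Function.update γ (s 0) (γ (s 0) - 1) a : ℕ) : ℝ) -
          (prefCount (fun j => s j.succ) j a : ℝ) := by
        rw [hup, hpc, if_neg h0]
        push_cast
        ring
      rw [hden]

section Transfer
variable {A : Type*} [Fintype A] [DecidableEq A] {n : ℕ}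

lemma comp_head_pos {s : Fin (n+1) → A} {γ : A → ℕ}
    (hcomp : ∀ a, (Finset.univ.filter (fun i => s i = a)).card = γ a) : 1 ≤ γ (s 0) := by
  rw [← hcomp (s 0)]
  apply Finset.card_pos.mpr
  exact ⟨0, by simp⟩

lemma comp_tail {s : Fin (n+1) → A} {γ : A → ℕ}
    (hcomp : ∀ a, (Finset.univ.filter (fun i => s i = a)).card = γ a) :
    ∀ a, (Finset.univ.filter (fun j : Fin n => s j.succ = a)).card =
      Function.update γ (s 0) (γ (s 0) - 1) a := by
  intro a
  have h := hcomp a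
  rw [comp_succ] at h
  by_cases h0 : s 0 = a
  · rw [if_pos h0] at h
    subst h0
    rw [Function.update_self]
    omega
  · rw [if_neg h0] at h
    rw [Function.update_of_ne (fun hh => h0 hh.symm)]
    omega

lemma sum_update_sub {γ : A → ℕ} {b : A} (hb : 1 ≤ γ b) (m : ℕ) (hsum : ∑ a, γ a = m + 1) :
    ∑ a, Function.update γ b (γ b - 1) a = m := by
  rw [Finset.sum_update_of_mem (Finset.mem_univ b)]
  have h2 : ∑ a ∈ Finset.univ \ {b}, γ a + γ b = m + 1 := by
    rw [← hsum]
    rw [Finset.sum_eq_sum_sdiff_singleton_add (Finset.mem_univ b) γ]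
  omega

lemma valid_tail {z : Fin (n+1) → A} {γ : A → ℕ}
    (hzvalid : ∀ i : Fin (n+1), prefCount z i (z i) < γ (z i)) :
    ∀ i : Fin n, prefCount (fun j => z j.succ) i ((fun j => z j.succ) i) <
      Function.update γ (z 0) (γ (z 0) - 1) ((fun j => z j.succ) i) := by
  intro i
  have h := hzvalid i.succ
  rw [prefCount_succ] at h
  simp only
  by_cases h0 : z 0 = z i.succ
  · rw [if_pos h0] at h
    rw [← h0] at h ⊢
    rw [Function.update_self]
    omega
  · rw [if_neg h0] at h
    rw [Function.update_of_ne (fun hh => h0 hh.symm)]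
    omega

lemma greedy_tail {z : Fin (n+1) → A} {γ : A → ℕ}
    (hzgreedy : ∀ i : Fin (n+1), ∀ a : A, prefCount z i a < γ a →
      γ (z i) - prefCount z i (z i) ≤ γ a - prefCount z i a) :
    ∀ i : Fin n, ∀ a : A,
      prefCount (fun j => z j.succ) i a < Function.update γ (z 0) (γ (z 0) - 1) a →
      Function.update γ (z 0) (γ (z 0) - 1) ((fun j => z j.succ) i) -
          prefCount (fun j => z j.succ) i ((fun j => z j.succ) i) ≤
        Function.update γ (z 0) (γ (z 0) - 1) a - prefCount (fun j => z j.succ) i a := by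
  intro i a ha
  simp only at ha ⊢
  -- identities: for any x, γ x - prefCount z i.succ x = update γ ... x - prefCount tail i x
  have key : ∀ x : A, γ x - prefCount z i.succ x =
      Function.update γ (z 0) (γ (z 0) - 1) x - prefCount (fun j => z j.succ) i x := by
    intro x
    rw [prefCount_succ]
    by_cases h0 : z 0 = x
    · rw [if_pos h0, h0, Function.update_self, ← h0]
      omega
    · rw [if_neg h0, Function.update_of_ne (fun hh => h0 hh.symm)]
      omega
  have hlt : prefCount z i.succ a < γ a := by
    rw [prefCount_succ]
    by_cases h0 : z 0 = a
    · rw [if_pos h0]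
      rw [← h0] at ha ⊢
      rw [Function.update_self] at ha
      omega
    · rw [if_neg h0]
      rw [Function.update_of_ne (fun hh => h0 hh.symm)] at ha
      omega
  have h := hzgreedy i.succ a hlt
  rw [key (z i.succ), key a] at h
  exact h

end Transfer

lemma posParts_of_sum_zero {A : Type*} [Fintype A] {γ : A → ℕ} (h : ∑ a, γ a = 0) :
    posParts γ = 0 := by
  rw [posParts, Multiset.filter_eq_nil]
  intro x hx
  obtain ⟨a, _, rfl⟩ := Multiset.mem_map.mp hx
  have : γ a = 0 := by
    have := Finset.sum_eq_zero_iff.mp h a (Finset.mem_univ a)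
    exact this
  omega

lemma master {A : Type*} [Fintype A] [DecidableEq A] {δ : ℝ} (hδ : 0 < δ) :
    ∀ n (γ : A → ℕ), (∑ a, γ a = n) → ∀ s : Fin n → A,
    (∀ a, (Finset.univ.filter (fun i => s i = a)).card = γ a) →
    greedyCost γ δ s ≤ V δ n (sortedList γ) := by
  intro n
  induction n with
  | zero =>
    intro γ hγ s _
    have h0 : sortedList γ = [] := by
      rw [sortedList, posParts_of_sum_zero hγ, Multiset.sort_zero]
    rw [h0]
    simp [greedyCost, V]
  | succ m ih =>
    intro γ hγ s hscomp
    have hb : 1 ≤ γ (s 0) := comp_head_pos hscomp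
    rw [greedyCost_succ γ δ s hb]
    have htail := ih (Function.update γ (s 0) (γ (s 0) - 1)) (sum_update_sub hb m hγ)
      (fun j => s j.succ) (comp_tail hscomp)
    have hchain := chain hδ (sortedList γ) (sortedList_sorted γ) (sortedList_pos γ)
      (γ (s 0)) (mem_sortedList γ hb) (m+1) (by rw [sortedList_sum, hγ])
    have hupd := V_sortedList_update δ γ (s 0) hb m
    have hcast : fδ δ (((m:ℝ)+1)/(γ (s 0))) = fδ δ ((((m+1:ℕ)):ℝ)/(γ (s 0))) := by push_cast; ring_nf
    rw [hcast]
    have hm : (m + 1) - 1 = m := rfl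
    rw [hm] at hchain
    calc fδ δ ((((m+1:ℕ)):ℝ)/(γ (s 0))) +
        greedyCost (Function.update γ (s 0) (γ (s 0) - 1)) δ (fun j => s j.succ)
        ≤ fδ δ ((((m+1:ℕ)):ℝ)/(γ (s 0))) +
          V δ m (sortedList (Function.update γ (s 0) (γ (s 0) - 1))) := by linarith
      _ = fδ δ ((((m+1:ℕ)):ℝ)/(γ (s 0))) +
          V δ m (List.orderedInsert (· ≤ ·) (γ (s 0) - 1) ((sortedList γ).erase (γ (s 0)))) := by
            rw [hupd]
      _ ≤ V δ (m+1) (sortedList γ) := hchain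

lemma master2 {A : Type*} [Fintype A] [DecidableEq A] {δ : ℝ} (hδ : 0 < δ) :
    ∀ n (γ : A → ℕ), (∑ a, γ a = n) → ∀ z : Fin n → A,
    (∀ a, (Finset.univ.filter (fun i => z i = a)).card = γ a) →
    (∀ i : Fin n, prefCount z i (z i) < γ (z i)) →
    (∀ i : Fin n, ∀ a : A, prefCount z i a < γ a →
      γ (z i) - prefCount z i (z i) ≤ γ a - prefCount z i a) →
    greedyCost γ δ z = V δ n (sortedList γ) := by
  intro n
  induction n with
  | zero =>
    intro γ hγ z _ _ _
    have h0 : sortedList γ = [] := by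
      rw [sortedList, posParts_of_sum_zero hγ, Multiset.sort_zero]
    rw [h0]
    simp [greedyCost, V]
  | succ m ih =>
    intro γ hγ z hzcomp hzvalid hzgreedy
    have hb : 1 ≤ γ (z 0) := comp_head_pos hzcomp
    -- minimality of γ (z 0) among positive parts
    have hmin : ∀ x ∈ sortedList γ, γ (z 0) ≤ x := by
      intro x hx
      have hx' : x ∈ posParts γ := by rwa [← Multiset.mem_sort (· ≤ ·)]
      obtain ⟨hx2, hxpos⟩ := Multiset.mem_filter.mp hx'
      obtain ⟨a, _, rfl⟩ := Multiset.mem_map.mp hx2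
      have := hzgreedy 0 a (by rw [prefCount_zero]; exact hxpos)
      rw [prefCount_zero, prefCount_zero] at this
      omega
    -- head structure
    obtain ⟨g, t, hl⟩ : ∃ g t, sortedList γ = g :: t := by
      cases hsl : sortedList γ with
      | nil =>
        exfalso
        have := mem_sortedList γ hb
        rw [hsl] at this
        simp at this
      | cons g t => exact ⟨g, t, rfl⟩
    have hgz : g = γ (z 0) := by
      have h1 : γ (z 0) ≤ g := hmin g (by rw [hl]; simp)
      have h2 : g ≤ γ (z 0) := by
        have hmem := mem_sortedList γ hb
        rw [hl] at hmem
        rcases List.mem_cons.mp hmem with h | h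
        · omega
        · exact List.rel_of_pairwise_cons (hl ▸ sortedList_sorted γ) h
      omega
    subst hgz
    have hsum : γ (z 0) + t.sum = m + 1 := by
      have h5 := sortedList_sum γ
      rw [hl, List.sum_cons] at h5
      omega
    -- tail greedy cost
    have htail := ih (Function.update γ (z 0) (γ (z 0) - 1)) (sum_update_sub hb m hγ)
      (fun j => z j.succ) (comp_tail hzcomp) (valid_tail hzvalid) (greedy_tail hzgreedy)
    rw [greedyCost_succ γ δ z hb, htail, V_sortedList_update δ γ (z 0) hb m, hl,
      List.erase_cons_head]
    have hOI : List.orderedInsert (· ≤ ·) (γ (z 0) - 1) t = (γ (z 0) - 1) :: t := by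
      cases t with
      | nil => rfl
      | cons c tc =>
        simp only [List.orderedInsert]
        rw [if_pos]
        have : γ (z 0) ≤ c := List.rel_of_pairwise_cons (hl ▸ sortedList_sorted γ) (a' := c) (by simp)
        omega
    rw [hOI]
    show fδ δ (((m:ℝ)+1)/(γ (z 0))) + (blockCost δ m (γ (z 0) - 1) + V δ (m - (γ (z 0)-1)) t) =
      blockCost δ (m+1) (γ (z 0)) + V δ ((m+1) - γ (z 0)) t
    rw [blockCost_succ δ (m+1) (γ (z 0)) hb (by omega)]
    have e1 : (m+1) - 1 = m := rfl
    rw [e1]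
    have e2 : m - (γ (z 0) - 1) = (m+1) - γ (z 0) := by omega
    rw [e2]
    have e3 : (((m+1:ℕ)):ℝ) = (m:ℝ) + 1 := by push_cast; ring
    rw [e3]
    ring


/-- Optimality of a greedy maximizer: any greedily constructed sequence `z`
    (always picking a symbol with minimal positive remaining count) globally maximizes
    the cost over all sequences with composition `γ`. -/
theorem greedyCost_le_greedy {A : Type*} [Fintype A] [DecidableEq A]
    (n : ℕ) (hn : 0 < n) (γ : A → ℕ) (hγ : ∑ a, γ a = n)
    (δ : ℝ) (hδ : 0 < δ) (hδn : δ ≤ 1 / (n : ℝ))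
    (z : Fin n → A)
    (hzcomp : ∀ a, (Finset.univ.filter (fun i => z i = a)).card = γ a)
    (hzvalid : ∀ i : Fin n, prefCount z i (z i) < γ (z i))
    (hzgreedy : ∀ i : Fin n, ∀ a : A, prefCount z i a < γ a →
      γ (z i) - prefCount z i (z i) ≤ γ a - prefCount z i a)
    (s : Fin n → A)
    (hscomp : ∀ a, (Finset.univ.filter (fun i => s i = a)).card = γ a) :
    greedyCost γ δ s ≤ greedyCost γ δ z := by
  have heq := master2 hδ n γ hγ z hzcomp hzvalid hzgreedy
  have hle := master hδ n γ hγ s hscomp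
  rw [heq]
  exact hle
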